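/- Suppose s is a finite sequence over {I,O} of length L ≥ 1 that is the reduced dynamics of some positive integer x, where a = number of I's in s. Then 3^a < 2^L; consequently, with s' obtained by replacing I by I'(x)=3x/2, one has s'(P) = (3^a/2^L)·P < P for every positive rational P. -/

import Mathlib

/-- A Collatz step symbol: `I` stands for x ↦ (3x+1)/2 (odd case), `O` for x ↦ x/2 (even case). -/
inductive CStep where
  | I : CStep
  | O : CStep
deriving DecidableEq

/-- Integer action of a step. -/
def stepFn : CStep → ℤ → ℤ
  | .I, x => (3 * x + 1) / 2
  | .O, x => x / 2

/-- Apply a sequence of steps left to right to an integer. -/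
def runSteps (s : List CStep) (x : ℤ) : ℤ := s.foldl (fun y t => stepFn t y) x

/-- Rational action of the primed steps: I'(x) = 3x/2, O(x) = x/2. -/
def stepFn' : CStep → ℚ → ℚ
  | .I, x => 3 * x / 2
  | .O, x => x / 2

/-- Apply the primed sequence left to right to a rational. -/
def runSteps' (s : List CStep) (x : ℚ) : ℚ := s.foldl (fun y t => stepFn' t y) x

/-- Count of `I` symbols. -/
def cntI : List CStep → ℕ
  | [] => 0
  | .I :: t => cntI t + 1
  | .O :: t => cntI t

/-- Count of `O` symbols. -/
def cntO : List CStep → ℕ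
  | [] => 0
  | .I :: t => cntO t
  | .O :: t => cntO t + 1

/-- `s` is a valid Collatz transformation sequence for `x`: at each step the current
value is odd exactly when the next symbol is `I` (hence even exactly when it is `O`). -/
def ValidSeq (s : List CStep) (x : ℤ) : Prop :=
  ∀ i (h : i < s.length), (s.get ⟨i, h⟩ = CStep.I ↔ Odd (runSteps (s.take i) x))

/-- `s` is the reduced Collatz dynamics of `x`: a valid sequence whose final value is `< x`
while every proper nonempty prefix yields a value `≥ x`. -/
def IsReducedDyn (s : List CStep) (x : ℤ) : Prop :=
  ValidSeq s x ∧ runSteps s x < x ∧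
    ∀ i, 1 ≤ i → i < s.length → x ≤ runSteps (s.take i) x

lemma runSteps_cons (t : CStep) (l : List CStep) (x : ℤ) :
    runSteps (t :: l) x = runSteps l (stepFn t x) := rfl

lemma runSteps'_cons (t : CStep) (l : List CStep) (x : ℚ) :
    runSteps' (t :: l) x = runSteps' l (stepFn' t x) := rfl

lemma validSeq_head {t : CStep} {rest : List CStep} {x : ℤ} (hv : ValidSeq (t :: rest) x) :
    t = CStep.I ↔ Odd x := by
  have := hv 0 (by simp)
  simpa [runSteps] using this

lemma validSeq_tail {t : CStep} {rest : List CStep} {x : ℤ} (hv : ValidSeq (t :: rest) x) :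
    ValidSeq rest (stepFn t x) := by
  intro i h
  have := hv (i + 1) (by simpa using Nat.succ_lt_succ h)
  simpa [runSteps_cons, List.take_succ_cons] using this

lemma key (s : List CStep) : ∀ x : ℤ, ValidSeq s x →
    (3 : ℚ) ^ cntI s / 2 ^ s.length * (x : ℚ) ≤ (runSteps s x : ℚ) := by
  induction s with
  | nil => intro x _; simp [runSteps, cntI]
  | cons t rest ih =>
    intro x hv
    have htail := validSeq_tail hv
    have hhead := validSeq_head hv
    cases t with
    | I =>
      obtain ⟨m, hm⟩ := hhead.mp rfl
      have hk : stepFn CStep.I x = 3 * m + 2 := by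
        show (3 * x + 1) / 2 = 3 * m + 2
        rw [hm]; omega
      have hih := ih _ htail
      rw [runSteps_cons, hk]
      calc (3:ℚ) ^ cntI (CStep.I :: rest) / 2 ^ (CStep.I :: rest).length * (x:ℚ)
          ≤ (3:ℚ) ^ cntI rest / 2 ^ rest.length * ((3 * m + 2 : ℤ) : ℚ) := by
            have hpos : (0:ℚ) < (3:ℚ) ^ cntI rest / 2 ^ rest.length := by positivity
            have hx' : ((x:ℚ)) = 2 * (m:ℚ) + 1 := by exact_mod_cast hm
            simp only [cntI, List.length_cons, pow_succ]
            push_cast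
            rw [hx']
            rw [div_mul_eq_mul_div, div_mul_eq_mul_div, div_le_div_iff₀ (by positivity) (by positivity)]
            nlinarith [pow_pos (show (0:ℚ) < 3 by norm_num) (cntI rest),
              pow_pos (show (0:ℚ) < 2 by norm_num) rest.length]
        _ ≤ (runSteps rest (3 * m + 2) : ℚ) := by
            have := hih; rw [hk] at this; exact this
    | O =>
      have hev : Even x := by
        rcases Int.even_or_odd x with h | h
        · exact h
        · exact absurd (hhead.mpr h) (by simp)
      obtain ⟨m, hm⟩ := hev
      have hk : stepFn CStep.O x = m := by
        show x / 2 = m; omega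
      have hih := ih _ htail
      rw [runSteps_cons, hk]
      calc (3:ℚ) ^ cntI (CStep.O :: rest) / 2 ^ (CStep.O :: rest).length * (x:ℚ)
          = (3:ℚ) ^ cntI rest / 2 ^ rest.length * ((m : ℤ) : ℚ) := by
            have hx' : ((x:ℚ)) = 2 * (m:ℚ) := by exact_mod_cast (by linarith [hm] : x = 2*m)
            simp only [cntI, List.length_cons, pow_succ]
            rw [hx']
            push_cast
            field_simp
        _ ≤ (runSteps rest m : ℚ) := by
            have := hih; rw [hk] at this; exact this

lemma runSteps'_eq (s : List CStep) : ∀ P : ℚ,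
    runSteps' s P = (3 ^ cntI s / 2 ^ s.length) * P := by
  induction s with
  | nil => intro P; simp [runSteps', cntI]
  | cons t rest ih =>
    intro P
    cases t with
    | I =>
      rw [runSteps'_cons, ih]
      simp only [cntI, List.length_cons, pow_succ, stepFn']
      field_simp; try ring
    | O =>
      rw [runSteps'_cons, ih]
      simp only [cntI, List.length_cons, pow_succ, stepFn']
      field_simp; try ring

theorem stmt11 (x : ℤ) (hx : 0 < x) (s : List CStep) (hs : 1 ≤ s.length)
    (hr : IsReducedDyn s x) :
    (3 : ℚ) ^ cntI s < 2 ^ s.length ∧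
    ∀ P : ℚ, 0 < P →
      runSteps' s P = (3 ^ cntI s / 2 ^ s.length) * P ∧ runSteps' s P < P := by
  obtain ⟨hv, hlt, -⟩ := hr
  have hxQ : (0:ℚ) < (x:ℚ) := by exact_mod_cast hx
  have h1 : (3:ℚ) ^ cntI s / 2 ^ s.length * (x:ℚ) < (x:ℚ) := by
    calc (3:ℚ) ^ cntI s / 2 ^ s.length * (x:ℚ) ≤ (runSteps s x : ℚ) := key s x hv
      _ < (x:ℚ) := by exact_mod_cast hlt
  have h2 : (3:ℚ) ^ cntI s / 2 ^ s.length < 1 := by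
    exact lt_of_mul_lt_mul_right (by rw [one_mul]; exact h1) hxQ.le
  have h3 : (3:ℚ) ^ cntI s < 2 ^ s.length :=
    (div_lt_one (by positivity)).mp h2
  refine ⟨h3, fun P hP => ⟨runSteps'_eq s P, ?_⟩⟩
  rw [runSteps'_eq s P]
  calc (3:ℚ) ^ cntI s / 2 ^ s.length * P < 1 * P := by
        exact mul_lt_mul_of_pos_right h2 hP
    _ = P := one_mul P
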